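/- arXiv:2411.07561 — 2 statements merged into one kernel-verified Lean document; each statement's English description precedes it below -/
import Mathlib

section
/- Let X be a real symmetric positive definite n × n matrix. Then sup over real symmetric positive definite n × n matrices Z of (−Tr(XZ) + 2 Tr(√Z)) equals Tr(X⁻¹), and the supremum is attained at Z* = X⁻². Moreover, the conjugate computation holds: for every symmetric positive definite Z, sup over symmetric positive definite X of (−Tr(XZ) − Tr(X⁻¹)) equals −2 Tr(√Z). -/
open Matrix

section OldSqrt

open scoped ComplexOrder

/-- The positive semidefinite square root, as `Matrix.PosSemidef.sqrt` was defined in the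
older Mathlib (removed since). -/
noncomputable def Matrix.PosSemidef.sqrt {n 𝕜 : Type*} [Fintype n] [DecidableEq n] [RCLike 𝕜]
    {A : Matrix n n 𝕜} (hA : A.PosSemidef) : Matrix n n 𝕜 :=
  (hA.1.eigenvectorUnitary : Matrix n n 𝕜) *
    diagonal ((↑) ∘ (fun i => Real.sqrt (hA.1.eigenvalues i))) *
    (star hA.1.eigenvectorUnitary : Matrix n n 𝕜)

end OldSqrt

open scoped MatrixOrder in
private lemma oldSqrt_eq {m : ℕ} {A : Matrix (Fin m) (Fin m) ℝ} (hA : A.PosSemidef) :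
    hA.sqrt = CFC.sqrt A := by
  rw [CFC.sqrt_eq_cfc, cfc_nnreal_eq_real _ A, hA.1.cfc_eq]
  simp only [IsHermitian.cfc, Unitary.conjStarAlgAut_apply, Matrix.PosSemidef.sqrt]
  congr 2
  congr 1
  funext i
  simp [hA.eigenvalues_nonneg i]

open scoped MatrixOrder in
private lemma Matrix.PosSemidef.posSemidef_sqrt {m : ℕ} {A : Matrix (Fin m) (Fin m) ℝ}
    (hA : A.PosSemidef) : hA.sqrt.PosSemidef := by
  rw [oldSqrt_eq]
  exact (CFC.sqrt_nonneg A).posSemidef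

open scoped MatrixOrder in
private lemma Matrix.PosSemidef.sqrt_mul_self {m : ℕ} {A : Matrix (Fin m) (Fin m) ℝ}
    (hA : A.PosSemidef) : hA.sqrt * hA.sqrt = A := by
  rw [oldSqrt_eq]
  exact CFC.sqrt_mul_sqrt_self A hA.nonneg

open scoped MatrixOrder in
private lemma Matrix.PosSemidef.eq_sqrt_of_sq_eq {m : ℕ} {A B : Matrix (Fin m) (Fin m) ℝ}
    (hA : A.PosSemidef) (hB : B.PosSemidef) (hAB : A ^ 2 = B) : A = hB.sqrt := by
  rw [oldSqrt_eq]
  exact (CFC.sqrt_unique (by rw [← hAB, sq]) hA.nonneg).symm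

private lemma trace_nonneg' {m : ℕ} {M : Matrix (Fin m) (Fin m) ℝ} (hM : M.PosSemidef) :
    0 ≤ M.trace := by
  exact hM.trace_nonneg

private lemma posDef_mul_self {m : ℕ} {M : Matrix (Fin m) (Fin m) ℝ} (hM : M.PosDef) :
    (M * M).PosDef := by
  have hsym : Mᵀ = M := hM.1
  refine PosDef.of_dotProduct_mulVec_pos ?_ fun x hx => ?_
  · show (M * M)ᴴ = M * M
    rw [conjTranspose_mul, hM.1.eq]
  · have hMx : M *ᵥ x ≠ 0 := by
      intro h
      apply hx
      have hinj := Matrix.mulVec_injective_iff_isUnit.mpr hM.isUnit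
      exact hinj (by simpa using h)
    have : star x ⬝ᵥ (M * M) *ᵥ x = star (M *ᵥ x) ⬝ᵥ (M *ᵥ x) := by
      rw [← mulVec_mulVec, dotProduct_mulVec]
      congr 1
      simp [star, ← Matrix.mulVec_transpose, hsym]
    rw [this]
    exact Matrix.dotProduct_star_self_pos_iff.mpr hMx

private lemma key_ineq {m : ℕ} {X Z : Matrix (Fin m) (Fin m) ℝ} (hX : X.PosDef) (hZ : Z.PosDef) :
    2 * hZ.posSemidef.sqrt.trace ≤ (X * Z).trace + X⁻¹.trace := by
  set S := hZ.posSemidef.sqrt with hS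
  have hdet : IsUnit X.det := hX.det_pos.ne'.isUnit
  have h1 : X * X⁻¹ = 1 := mul_nonsing_inv X hdet
  have h2 : X⁻¹ * X = 1 := nonsing_inv_mul X hdet
  have hAH : (S - X⁻¹)ᴴ = S - X⁻¹ := by
    rw [conjTranspose_sub, hZ.posSemidef.posSemidef_sqrt.1.eq, hX.1.inv.eq]
  have hpsd : ((S - X⁻¹)ᴴ * X * (S - X⁻¹)).PosSemidef :=
    hX.posSemidef.conjTranspose_mul_mul_same (S - X⁻¹)
  have htr : ((S - X⁻¹)ᴴ * X * (S - X⁻¹)).trace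
      = (X * Z).trace + X⁻¹.trace - 2 * S.trace := by
    have hexp : (S - X⁻¹)ᴴ * X * (S - X⁻¹)
        = S * X * S - S - S + X⁻¹ := by
      rw [hAH, sub_mul, sub_mul, mul_sub, mul_sub, h2,
        mul_assoc S X X⁻¹, h1, mul_one]
      simp only [Matrix.one_mul]
      abel
    rw [hexp, trace_add, trace_sub, trace_sub]
    have hSXS : (S * X * S).trace = (X * Z).trace := by
      rw [mul_assoc, trace_mul_comm, mul_assoc, hZ.posSemidef.sqrt_mul_self]
    rw [hSXS]; ring
  have := trace_nonneg' hpsd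
  rw [htr] at this
  linarith

private lemma posDef_sqrt' {m : ℕ} {Z : Matrix (Fin m) (Fin m) ℝ} (hZ : Z.PosDef) :
    hZ.posSemidef.sqrt.PosDef := by
  have hdet : IsUnit hZ.posSemidef.sqrt.det := by
    have h : hZ.posSemidef.sqrt.det * hZ.posSemidef.sqrt.det = Z.det := by
      rw [← det_mul, hZ.posSemidef.sqrt_mul_self]
    have hz := hZ.det_pos
    refine isUnit_iff_ne_zero.mpr fun h0 => ?_
    rw [h0, mul_zero] at h
    linarith
  refine PosDef.of_dotProduct_mulVec_pos hZ.posSemidef.posSemidef_sqrt.1 fun x hx => ?_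
  have hle := hZ.posSemidef.posSemidef_sqrt.dotProduct_mulVec_nonneg x
  have hne : star x ⬝ᵥ hZ.posSemidef.sqrt *ᵥ x ≠ 0 := by
    intro h0
    have h := (hZ.posSemidef.posSemidef_sqrt.dotProduct_mulVec_zero_iff x).mp h0
    apply hx
    have hinj := Matrix.mulVec_injective_iff_isUnit.mpr
      ((isUnit_iff_isUnit_det _).2 hdet)
    exact hinj (by simpa using h)
  exact lt_of_le_of_ne hle (Ne.symm hne)

/-- Max formulation of `Tr(X⁻¹)`:
`sup_{Z ≻ 0} (−Tr(XZ) + 2 Tr(√Z)) = Tr(X⁻¹)`, attained at `Z* = X⁻²`.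
Moreover the conjugate computation holds: for every `Z ≻ 0`,
`sup_{X ≻ 0} (−Tr(XZ) − Tr(X⁻¹)) = −2 Tr(√Z)`. -/
theorem maxFormulation_trace_inv {n : ℕ}
    (X : Matrix (Fin n) (Fin n) ℝ) (hX : X.PosDef) :
    (IsGreatest
      {v : ℝ | ∃ Z : Matrix (Fin n) (Fin n) ℝ, ∃ hZ : Z.PosDef,
        v = -(X * Z).trace + 2 * hZ.posSemidef.sqrt.trace}
      X⁻¹.trace ∧
    ∃ hZs : (X⁻¹ * X⁻¹).PosDef,
      -(X * (X⁻¹ * X⁻¹)).trace + 2 * hZs.posSemidef.sqrt.trace = X⁻¹.trace) ∧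
    ∀ (Z : Matrix (Fin n) (Fin n) ℝ) (hZ : Z.PosDef),
      IsGreatest
        {v : ℝ | ∃ Y : Matrix (Fin n) (Fin n) ℝ, Y.PosDef ∧
          v = -(Y * Z).trace - Y⁻¹.trace}
        (-(2 * hZ.posSemidef.sqrt.trace)) := by
  have hdet : IsUnit X.det := hX.det_pos.ne'.isUnit
  have hZs : (X⁻¹ * X⁻¹).PosDef := posDef_mul_self hX.inv
  have hsq : X⁻¹ = hZs.posSemidef.sqrt :=
    hX.inv.posSemidef.eq_sqrt_of_sq_eq hZs.posSemidef (by rw [pow_two])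
  have hXZ : X * (X⁻¹ * X⁻¹) = X⁻¹ := by
    rw [← mul_assoc, mul_nonsing_inv X hdet, Matrix.one_mul]
  have hval : -(X * (X⁻¹ * X⁻¹)).trace + 2 * hZs.posSemidef.sqrt.trace = X⁻¹.trace := by
    rw [hXZ, ← hsq]; ring
  refine ⟨⟨⟨⟨X⁻¹ * X⁻¹, hZs, hval.symm⟩, ?_⟩, ⟨hZs, hval⟩⟩, fun Z hZ => ⟨?_, ?_⟩⟩
  · rintro v ⟨Z, hZ, rfl⟩
    have := key_ineq hX hZ
    linarith
  · -- membership for part 2 with Y = (√Z)⁻¹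
    set S := hZ.posSemidef.sqrt with hSdef
    have hSpd : S.PosDef := posDef_sqrt' hZ
    have hSdet : IsUnit S.det := hSpd.det_pos.ne'.isUnit
    refine ⟨S⁻¹, hSpd.inv, ?_⟩
    have h1 : S⁻¹ * Z = S := by
      rw [← hZ.posSemidef.sqrt_mul_self, ← hSdef, ← mul_assoc, nonsing_inv_mul S hSdet,
        Matrix.one_mul]
    have h2 : S⁻¹⁻¹ = S := nonsing_inv_nonsing_inv S hSdet
    rw [h1, h2]; ring
  · rintro v ⟨Y, hY, rfl⟩
    have := key_ineq hY hZ
    linarith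
end

section
/- Let A be a real n × M matrix of full row rank n, and let X and X_t be real symmetric positive definite M × M matrices (so A X Aᵀ and A X_t Aᵀ are positive definite). Define B_t = (A X_t Aᵀ)⁻¹ A X_t. Then (A X Aᵀ)⁻¹ ⪯ B_t X⁻¹ B_tᵀ in the Loewner order (i.e. B_t X⁻¹ B_tᵀ − (A X Aᵀ)⁻¹ is positive semidefinite), with equality when X = X_t. -/
open Matrix

-- injectivity of Aᵀ *ᵥ from full row rank
lemma aux_inj {n M : ℕ} (A : Matrix (Fin n) (Fin M) ℝ) (hA : A.rank = n)
    {x : Fin n → ℝ} (hx : Aᵀ *ᵥ x = 0) : x = 0 := by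
  have hrank : Aᵀ.rank = n := by rw [A.rank_transpose, hA]
  have h := Aᵀ.mulVecLin.finrank_range_add_finrank_ker
  rw [Matrix.rank] at hrank
  have hdom : Module.finrank ℝ (Fin n → ℝ) = n := by simp
  rw [hrank, hdom] at h
  have hker : Module.finrank ℝ (LinearMap.ker Aᵀ.mulVecLin) = 0 := by omega
  have : LinearMap.ker Aᵀ.mulVecLin = ⊥ :=
    Submodule.finrank_eq_zero.mp hker
  have hmem : x ∈ LinearMap.ker Aᵀ.mulVecLin := by
    simp only [LinearMap.mem_ker, Matrix.mulVecLin_apply]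
    exact hx
  rw [this, Submodule.mem_bot] at hmem
  exact hmem

lemma aux_posdef {n M : ℕ} (A : Matrix (Fin n) (Fin M) ℝ) (hA : A.rank = n)
    {X : Matrix (Fin M) (Fin M) ℝ} (hX : X.PosDef) : (A * X * Aᵀ).PosDef := by
  refine Matrix.PosDef.of_dotProduct_mulVec_pos ?_ ?_
  · have hXh : Xᴴ = X := hX.isHermitian.eq
    show (A * X * Aᵀ)ᴴ = _
    rw [conjTranspose_eq_transpose_of_trivial]
    rw [transpose_mul, transpose_mul, transpose_transpose]
    rw [show Xᵀ = X from by simpa [conjTranspose_eq_transpose_of_trivial] using hXh,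
      Matrix.mul_assoc]

  · intro x hx
    have hAx : Aᵀ *ᵥ x ≠ 0 := fun h => hx (aux_inj A hA h)
    have := hX.dotProduct_mulVec_pos hAx
    have e : x ⬝ᵥ (A * X * Aᵀ) *ᵥ x = (Aᵀ *ᵥ x) ⬝ᵥ X *ᵥ (Aᵀ *ᵥ x) := by
      rw [← mulVec_mulVec, ← mulVec_mulVec, dotProduct_mulVec x, ← mulVec_transpose]
    simpa [star_trivial, e] using this
/-- Matrix majorization of the inverse information matrix used in E-optimal
experiment design: with `B_t = (A X_t Aᵀ)⁻¹ A X_t`, one has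
`(A X Aᵀ)⁻¹ ⪯ B_t X⁻¹ B_tᵀ` in the Loewner order, with equality at `X = X_t`. -/
theorem inverseInfoMatrix_majorization {n M : ℕ}
    (A : Matrix (Fin n) (Fin M) ℝ) (hA : A.rank = n)
    (X Xt : Matrix (Fin M) (Fin M) ℝ) (hX : X.PosDef) (hXt : Xt.PosDef) :
    ((((A * Xt * Aᵀ)⁻¹ * A * Xt) * X⁻¹ * ((A * Xt * Aᵀ)⁻¹ * A * Xt)ᵀ)
        - (A * X * Aᵀ)⁻¹).PosSemidef ∧
    (X = Xt →
      (((A * Xt * Aᵀ)⁻¹ * A * Xt) * X⁻¹ * ((A * Xt * Aᵀ)⁻¹ * A * Xt)ᵀ)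
        = (A * X * Aᵀ)⁻¹) := by
  have hPX : (A * X * Aᵀ).PosDef := aux_posdef A hA hX
  have hPXt : (A * Xt * Aᵀ).PosDef := aux_posdef A hA hXt
  have hdet : IsUnit (A * X * Aᵀ).det := isUnit_iff_ne_zero.mpr hPX.det_pos.ne'
  have hdett : IsUnit (A * Xt * Aᵀ).det := isUnit_iff_ne_zero.mpr hPXt.det_pos.ne'
  set B := (A * Xt * Aᵀ)⁻¹ * A * Xt with hBdef
  set W := (A * X * Aᵀ)⁻¹ with hWdef
  have hXs : Xᵀ = X := by
    simpa [conjTranspose_eq_transpose_of_trivial] using hX.isHermitian.eq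
  have hWs : Wᵀ = W := by
    simpa [conjTranspose_eq_transpose_of_trivial] using hPX.inv.isHermitian.eq
  have hWinv : W * (A * X * Aᵀ) = 1 := Matrix.nonsing_inv_mul _ hdet
  have hBA : B * Aᵀ = 1 := by
    rw [hBdef, Matrix.mul_assoc, Matrix.mul_assoc, ← Matrix.mul_assoc A Xt Aᵀ,
      Matrix.nonsing_inv_mul _ hdett]
  have hXu : IsUnit X.det := isUnit_iff_ne_zero.mpr hX.det_pos.ne'
  have hXinv : X * X⁻¹ = 1 := Matrix.mul_nonsing_inv _ hXu
  have hXinv' : X⁻¹ * X = 1 := Matrix.nonsing_inv_mul _ hXu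
  open scoped MatrixOrder in
  set R := CFC.sqrt X⁻¹ with hRdef
  open scoped MatrixOrder in
  have hRR : R * R = X⁻¹ := CFC.sqrt_mul_sqrt_self X⁻¹ hX.inv.posSemidef.nonneg
  open scoped MatrixOrder in
  have hRs : Rᵀ = R := by
    simpa [conjTranspose_eq_transpose_of_trivial] using
      (CFC.sqrt_nonneg X⁻¹).posSemidef.isHermitian.eq
  set C := B * R with hCdef
  set D := W * A * X * R with hDdef
  have hDDt : D * Dᵀ = W := by
    rw [hDdef]
    simp only [transpose_mul, transpose_transpose, hRs, hXs, hWs, Matrix.mul_assoc]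
    rw [← Matrix.mul_assoc R R, hRR, ← Matrix.mul_assoc X X⁻¹, hXinv, Matrix.one_mul,
      show W * (A * (X * (Aᵀ * W))) = W * (A * X * Aᵀ) * W by simp only [Matrix.mul_assoc],
      hWinv, Matrix.one_mul]
  have hCDt : C * Dᵀ = W := by
    rw [hCdef, hDdef]
    simp only [transpose_mul, transpose_transpose, hRs, hXs, hWs, Matrix.mul_assoc]
    rw [← Matrix.mul_assoc R R, hRR, ← Matrix.mul_assoc X⁻¹ X, hXinv', Matrix.one_mul,
      show B * (Aᵀ * W) = B * Aᵀ * W by simp only [Matrix.mul_assoc],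
      hBA, Matrix.one_mul]
  have hDCt : D * Cᵀ = W := by
    have := congrArg Matrix.transpose hCDt
    rwa [transpose_mul, transpose_transpose, hWs] at this
  have hCCt : C * Cᵀ = B * X⁻¹ * Bᵀ := by
    rw [hCdef, transpose_mul, hRs,
      show B * R * (R * Bᵀ) = B * (R * R) * Bᵀ by simp only [Matrix.mul_assoc], hRR]
  have key : B * X⁻¹ * Bᵀ - W = (C - D) * (C - D)ᵀ := by
    rw [transpose_sub, Matrix.sub_mul, Matrix.mul_sub, Matrix.mul_sub, hCDt, hDCt, hDDt, hCCt]
    abel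
  refine ⟨?_, ?_⟩
  · rw [key]
    have := Matrix.posSemidef_self_mul_conjTranspose (C - D)
    simpa [conjTranspose_eq_transpose_of_trivial] using this
  · rintro rfl
    have hAXAs : (A * X * Aᵀ)ᵀ = A * X * Aᵀ := by
      simpa [conjTranspose_eq_transpose_of_trivial] using hPX.isHermitian.eq
    rw [hBdef, transpose_mul, transpose_mul, hXs, transpose_nonsing_inv, hAXAs, ← hWdef]
    simp only [Matrix.mul_assoc]
    rw [← Matrix.mul_assoc X X⁻¹, hXinv, Matrix.one_mul,
      show W * (A * (X * (Aᵀ * W))) = W * (A * X * Aᵀ) * W by simp only [Matrix.mul_assoc],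
      hWinv, Matrix.one_mul]
end
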